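/- If G is an almost bipartite graph that is not a König-Egerváry graph, with unique odd cycle C, then V(C) ∪ N[diadem(G)] = V(G); consequently {V(C), N[diadem(G)]} is a partition of V(G). -/

import Mathlib

namespace AlmostBipartite

variable {V : Type*}

/-- The (open) neighborhood `N(X)` of a set of vertices: all vertices having a neighbor in `X`. -/
def nbhd (G : SimpleGraph V) (X : Set V) : Set V := {v | ∃ x ∈ X, G.Adj v x}

/-- The closed neighborhood `N[X] = X ∪ N(X)`. -/
def closedNbhd (G : SimpleGraph V) (X : Set V) : Set V := X ∪ nbhd G X

/-- A set of vertices is independent: no two of its vertices are adjacent. -/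
def IsIndepSet (G : SimpleGraph V) (S : Set V) : Prop :=
  ∀ ⦃a⦄, a ∈ S → ∀ ⦃b⦄, b ∈ S → ¬G.Adj a b

/-- The difference `d(X) = |X| - |N(X)|`. -/
noncomputable def diffOf (G : SimpleGraph V) (X : Set V) : ℤ :=
  (X.ncard : ℤ) - ((nbhd G X).ncard : ℤ)

/-- The critical difference `d(G)`: maximum of `d(I)` over independent sets `I`. -/
noncomputable def critDiff (G : SimpleGraph V) : ℤ :=
  sSup (diffOf G '' {S | IsIndepSet G S})

/-- A critical independent set: an independent set `A` with `d(A) = d(G)`. -/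
def IsCritIndep (G : SimpleGraph V) (A : Set V) : Prop :=
  IsIndepSet G A ∧ diffOf G A = critDiff G

/-- `diadem G` is the union of all critical independent sets of `G`. -/
def diadem (G : SimpleGraph V) : Set V := ⋃₀ {A | IsCritIndep G A}

/-- A maximum critical independent set: a critical independent set of maximum cardinality. -/
def IsMaxCritIndep (G : SimpleGraph V) (A : Set V) : Prop :=
  IsCritIndep G A ∧ ∀ B : Set V, IsCritIndep G B → B.ncard ≤ A.ncard

/-- `nucleus G` is the intersection of all maximum critical independent sets of `G`. -/
def nucleus (G : SimpleGraph V) : Set V := ⋂₀ {A | IsMaxCritIndep G A}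

/-- The independence number `α(G)`. -/
noncomputable def indepNum (G : SimpleGraph V) : ℕ :=
  sSup {n | ∃ S : Set V, IsIndepSet G S ∧ S.ncard = n}

/-- The critical independence number `α'(G)`: cardinality of a maximum critical independent set. -/
noncomputable def critIndepNum (G : SimpleGraph V) : ℕ :=
  sSup {n | ∃ S : Set V, IsCritIndep G S ∧ S.ncard = n}

/-- A maximum independent set. -/
def IsMaxIndep (G : SimpleGraph V) (S : Set V) : Prop :=
  IsIndepSet G S ∧ S.ncard = indepNum G

/-- `corona G` is the union of all maximum independent sets of `G`. -/
def corona (G : SimpleGraph V) : Set V := ⋃₀ {S | IsMaxIndep G S}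

/-- `core G` is the intersection of all maximum independent sets of `G`. -/
def core (G : SimpleGraph V) : Set V := ⋂₀ {S | IsMaxIndep G S}

/-- The matching number `μ(G)`: maximum size of a matching in `G`. -/
noncomputable def matchNum (G : SimpleGraph V) : ℕ :=
  sSup {n | ∃ M : SimpleGraph.Subgraph G, M.IsMatching ∧ M.edgeSet.ncard = n}

/-- `G` is a König-Egerváry graph if `α(G) + μ(G) = n(G)`. -/
def KonigEgervary (G : SimpleGraph V) : Prop :=
  indepNum G + matchNum G = Nat.card V

/-- A closed walk which is an odd cycle. -/
def IsOddCycleWalk (G : SimpleGraph V) {u : V} (c : G.Walk u u) : Prop :=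
  c.IsCycle ∧ Odd c.length

/-- `c` is the unique odd cycle of `G`: it is an odd cycle, and every odd cycle of `G`
has the same edge set as `c`.  A graph admitting such `c` is almost bipartite. -/
def IsUniqueOddCycle (G : SimpleGraph V) {u : V} (c : G.Walk u u) : Prop :=
  IsOddCycleWalk G c ∧
    ∀ (w : V) (c' : G.Walk w w), IsOddCycleWalk G c' →
      {e | e ∈ c'.edges} = {e | e ∈ c.edges}

/-- The vertex-deleted subgraph `G - v`. -/
def deleteVert (G : SimpleGraph V) (v : V) := G.induce {w | w ≠ v}

/-- `ϱ_v(G)`: the number of vertices `v` such that `G - v` is a König-Egerváry graph. -/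
noncomputable def rhoV (G : SimpleGraph V) : ℕ :=
  {v : V | KonigEgervary (deleteVert G v)}.ncard

end AlmostBipartite

open AlmostBipartite

/-!
Let `A` be a critical independent set and `Y = V ∖ N[A]`. Because `A` is critical, Hall's
condition holds from `N(A)` into `A`, and for every independent `I ⊆ Y` we have
`|I| ≤ |N(I) ∩ Y|`. If `C` met `N[A]`, then `Y` would contain no odd cycle and would split into
independent sets `S`, `T`; Hall's theorem would match `N(A)` into `A` and `S` into `T`, and with the
independent set `A ∪ T` this gives `α + μ ≥ n`, i.e. `G` is König-Egerváry. So `C` avoids `N[A]`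
for every critical `A`.

Now take `A` of maximum size. Then the inequality above is strict for nonempty `I`, and since
`Y - u` (for `u` on `C`) is bipartite, Hall's theorem shows that `Y - z` has a perfect matching for
every `z ∈ Y`. For an edge `zw` inside `Y`, the symmetric difference of the perfect matchings of
`Y - z` and `Y - w` contains an alternating path from `z` to `w`; it has even length, so together
with `wz` it is an odd cycle through `z`. By uniqueness this cycle is `C`, hence `Y ⊆ V(C)`.
-/

namespace SimpleGraph.Walk

variable {V : Type*} {G : SimpleGraph V}

theorem exists_isPath_or_exists_odd_isCycle [DecidableEq V] {a b : V} (p : G.Walk a b) :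
    (∃ q : G.Walk a b, q.IsPath ∧ q.support ⊆ p.support ∧ Even (q.length + p.length)) ∨
      ∃ (x : V) (c : G.Walk x x), c.IsCycle ∧ Odd c.length ∧ c.support ⊆ p.support := by
  induction p with
  | nil => exact .inl ⟨nil, .nil, List.Subset.refl _, by simp⟩
  | @cons a x b h p ih =>
    have hsub : p.support ⊆ (cons h p).support := by simp
    rcases ih with ⟨q, hq, hqp, hpar⟩ | ⟨y, c, hc, hodd, hcp⟩
    · -- if `a` lies on `q`, the part of `q` up to `a` closes up with `h` to a cycle; when that
      -- cycle is even, the rest of `q` is a path of the right parity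
      by_cases ha : a ∈ q.support
      · have hlen := congrArg length (q.take_spec ha)
        rw [length_append] at hlen
        rcases Nat.even_or_odd (q.takeUntil a ha).length with heven | hodd
        · have hq₁ := hq.takeUntil ha
          refine .inr ⟨a, cons h (q.takeUntil a ha), ?_, by simpa [Nat.odd_add_one], ?_⟩
          · refine (cons_isCycle_iff _ h).mpr ⟨hq₁, fun hmem => ?_⟩
            have := hq₁.length_eq_one_of_mem_edges (Sym2.eq_swap ▸ hmem)
            simp [this] at heven
          · simpa using List.cons_subset_cons a
              (List.Subset.trans (q.support_takeUntil_subset_support ha) hqp)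
        · refine .inl ⟨q.dropUntil a ha, hq.dropUntil ha, List.Subset.trans
            (q.support_dropUntil_subset_support ha) (List.Subset.trans hqp hsub), ?_⟩
          rw [length_cons]
          grind
      · exact .inl ⟨cons h q, hq.cons ha, by simpa using List.cons_subset_cons a hqp,
          by rw [length_cons, length_cons]; grind⟩
    · exact .inr ⟨y, c, hc, hodd, List.Subset.trans hcp hsub⟩

theorem exists_odd_isCycle_of_odd_length {v : V} (p : G.Walk v v) (hp : Odd p.length) :
    ∃ (x : V) (c : G.Walk x x), c.IsCycle ∧ Odd c.length ∧ c.support ⊆ p.support := by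
  classical
  refine p.exists_isPath_or_exists_odd_isCycle.resolve_left ?_
  rintro ⟨q, hq, -, hpar⟩
  rw [length_eq_zero_iff.mpr (isPath_iff_nil.mp hq), zero_add] at hpar
  exact Nat.not_even_iff_odd.mpr hp hpar

theorem odd_length_cons_iff_of_alternating {D : SimpleGraph V} (c : V → V → Prop)
    (halt : ∀ ⦃a b d⦄, D.Adj a b → D.Adj b d → a ≠ d → (c a b ↔ ¬ c b d))
    {w : V} (hw : ∀ ⦃a⦄, D.Adj a w → c a w) {x y : V} (h : D.Adj x y) (p : D.Walk y w)
    (hp : (cons h p).IsPath) : Odd (cons h p).length ↔ c x y := by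
  induction p generalizing x with
  | nil => simp [hw h]
  | @cons y y' w' h' p ih =>
    have hxy' : x ≠ y' := by
      rintro rfl
      exact ((cons_isPath_iff _ _).mp hp).2 (by simp)
    rw [length_cons, Nat.odd_add_one, ih hw h' hp.of_cons, halt h h' hxy']

end SimpleGraph.Walk

namespace AlmostBipartite

open SimpleGraph hiding IsIndepSet indepNum
open scoped symmDiff

variable {V : Type*} {G : SimpleGraph V}

lemma nbhd_union (X Y : Set V) : nbhd G (X ∪ Y) = nbhd G X ∪ nbhd G Y := by
  ext v
  simp only [nbhd, Set.mem_union, Set.mem_ofPred_eq, or_and_right, exists_or]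

lemma mem_closedNbhd_diadem {v : V} :
    v ∈ closedNbhd G (diadem G) ↔ ∃ A, IsCritIndep G A ∧ v ∈ closedNbhd G A := by
  simp only [closedNbhd, nbhd, diadem, Set.mem_union, Set.mem_sUnion, Set.mem_ofPred_eq]
  grind

lemma isIndepSet_singleton (v : V) : IsIndepSet G {v} := by
  rintro a rfl b rfl h
  exact G.loopless.irrefl _ h

lemma IsIndepSet.mono {S T : Set V} (hT : IsIndepSet G T) (h : S ⊆ T) : IsIndepSet G S :=
  fun _ ha _ hb => hT (h ha) (h hb)

lemma IsIndepSet.disjoint_nbhd {A : Set V} (hA : IsIndepSet G A) : Disjoint A (nbhd G A) :=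
  Set.disjoint_left.mpr fun _ ha ⟨_, hb, hab⟩ => hA ha hb hab

lemma IsIndepSet.union {A B : Set V} (hA : IsIndepSet G A) (hB : IsIndepSet G B)
    (hAB : Disjoint B (nbhd G A)) : IsIndepSet G (A ∪ B) := by
  rintro a (ha | ha) b (hb | hb) hab
  · exact hA ha hb hab
  · exact Set.disjoint_left.mp hAB hb ⟨a, ha, hab.symm⟩
  · exact Set.disjoint_left.mp hAB ha ⟨b, hb, hab⟩
  · exact hB ha hb hab

lemma IsIndepSet.inter_nbhd_subset {S T Y X : Set V} (hS : IsIndepSet G S) (hX : X ⊆ S)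
    (hY : Y ⊆ S ∪ T) : Y ∩ nbhd G X ⊆ T ∩ nbhd G X := by
  rintro v ⟨hvY, x, hx, hvx⟩
  exact ⟨(hY hvY).resolve_left fun hvS => hS hvS (hX hx) hvx, x, hx, hvx⟩

theorem exists_isIndepSet_partition {S : Set V}
    (h : ∀ (x : V) (c : G.Walk x x), c.IsCycle → Odd c.length → ∃ v ∈ c.support, v ∉ S) :
    ∃ S₀ S₁ : Set V, Disjoint S₀ S₁ ∧ S₀ ∪ S₁ = S ∧ IsIndepSet G S₀ ∧ IsIndepSet G S₁ := by
  have hcol : (G.induce S).Colorable 2 := by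
    refine two_colorable_iff_forall_loop_even.mpr fun x p => Nat.not_odd_iff_even.mp fun hodd => ?_
    obtain ⟨y, c, hc, hcodd, hcp⟩ :=
      (p.map (Embedding.induce S).toHom).exists_odd_isCycle_of_odd_length (by rwa [Walk.length_map])
    obtain ⟨v, hv, hvS⟩ := h y c hc hcodd
    obtain ⟨w, -, rfl⟩ := List.mem_map.mp (Walk.support_map _ p ▸ hcp hv)
    exact hvS w.2
  obtain ⟨C⟩ := hcol
  have hindep (i : Fin 2) : IsIndepSet G {v | ∃ h : v ∈ S, C ⟨v, h⟩ = i} :=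
    fun a ⟨ha, hca⟩ b ⟨hb, hcb⟩ hab =>
      C.valid (v := ⟨a, ha⟩) (w := ⟨b, hb⟩) hab (hca.trans hcb.symm)
  refine ⟨_, _, Set.disjoint_left.mpr ?_, ?_, hindep 0, hindep 1⟩
  · rintro v ⟨_, h0⟩ ⟨_, h1⟩
    exact zero_ne_one (h0.symm.trans h1)
  · ext v
    simp only [Set.mem_union, Set.mem_ofPred_eq]
    refine ⟨fun h => by rcases h with ⟨hv, -⟩ | ⟨hv, -⟩ <;> exact hv, fun hv => ?_⟩
    rcases Fin.exists_fin_two.mp ⟨C ⟨v, hv⟩, rfl⟩ with h | h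
    · exact .inl ⟨hv, h⟩
    · exact .inr ⟨hv, h⟩

lemma IsUniqueOddCycle.mem_support_iff {u : V} {c : G.Walk u u} (hc : IsUniqueOddCycle G c)
    {w : V} {c' : G.Walk w w} (hc' : c'.IsCycle) (hodd : Odd c'.length) {v : V} :
    v ∈ c'.support ↔ v ∈ c.support := by
  rw [Walk.mem_support_iff_exists_mem_edges_of_not_nil hc'.not_nil,
    Walk.mem_support_iff_exists_mem_edges_of_not_nil hc.1.1.not_nil]
  exact exists_congr fun e => and_congr_left' (Set.ext_iff.mp (hc.2 w c' ⟨hc', hodd⟩) e)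

lemma IsUniqueOddCycle.exists_isIndepSet_partition {u : V} {c : G.Walk u u}
    (hc : IsUniqueOddCycle G c) {S : Set V} {v : V} (hv : v ∈ c.support) (hvS : v ∉ S) :
    ∃ S₀ S₁ : Set V, Disjoint S₀ S₁ ∧ S₀ ∪ S₁ = S ∧ IsIndepSet G S₀ ∧ IsIndepSet G S₁ :=
  AlmostBipartite.exists_isIndepSet_partition fun _ _ hc' hodd =>
    ⟨v, (hc.mem_support_iff hc' hodd).mpr hv, hvS⟩

lemma adj_symmDiff_spanningCoe {M M' : G.Subgraph} {a b : V} :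
    (M.spanningCoe ∆ M'.spanningCoe).Adj a b ↔
      M.Adj a b ∧ ¬M'.Adj a b ∨ M'.Adj a b ∧ ¬M.Adj a b := by
  simp [symmDiff_def]

lemma adj_symmDiff_of_adj {M M' : G.Subgraph} (hM : M.IsMatching) (hM' : M'.IsMatching)
    {v p y : V} (hy : (M.spanningCoe ∆ M'.spanningCoe).Adj v y) (hp : M.Adj v p) :
    (M.spanningCoe ∆ M'.spanningCoe).Adj v p := by
  refine adj_symmDiff_spanningCoe.mpr (.inl ⟨hp, fun hp' => ?_⟩)
  rcases adj_symmDiff_spanningCoe.mp hy with ⟨hy, hy'⟩ | ⟨hy', hy⟩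
  · exact hy' (hM.eq_of_adj_left hp hy ▸ hp')
  · exact hy (hM'.eq_of_adj_left hp' hy' ▸ hp)

def IsStrictlyExpanding (G : SimpleGraph V) (Y : Set V) : Prop :=
  ∀ I ⊆ Y, I.Nonempty → IsIndepSet G I → I.ncard < (Y ∩ nbhd G I).ncard

section Finite

variable [Finite V]

lemma diffOf_le_critDiff {S : Set V} (h : IsIndepSet G S) : diffOf G S ≤ critDiff G :=
  le_csSup ((Set.toFinite _).image _).bddAbove ⟨S, h, rfl⟩

lemma exists_isMaxCritIndep (G : SimpleGraph V) : ∃ A, IsMaxCritIndep G A := by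
  obtain ⟨A₀, hA₀, hd⟩ : ∃ A₀ ∈ {S | IsIndepSet G S}, diffOf G A₀ = critDiff G :=
    (Set.Nonempty.image _ ⟨∅, fun _ h => absurd h (Set.notMem_empty _)⟩).csSup_mem
      ((Set.toFinite _).image _)
  have hbdd : BddAbove {n | ∃ A : Set V, IsCritIndep G A ∧ A.ncard = n} :=
    ⟨Nat.card V, by rintro _ ⟨A, -, rfl⟩; exact Set.ncard_le_card A⟩
  obtain ⟨A, hA, hcard⟩ := Nat.sSup_mem (s := {n | ∃ A : Set V, IsCritIndep G A ∧ A.ncard = n})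
    ⟨A₀.ncard, A₀, ⟨hA₀, hd⟩, rfl⟩ hbdd
  exact ⟨A, hA, fun B hB => hcard ▸ le_csSup hbdd ⟨B, hB, rfl⟩⟩

lemma diffOf_add_le_diffOf_union {A I : Set V} (hIA : Disjoint I (closedNbhd G A)) :
    diffOf G A + I.ncard - ((closedNbhd G A)ᶜ ∩ nbhd G I).ncard ≤ diffOf G (A ∪ I) := by
  have hsub : nbhd G (A ∪ I) ⊆ nbhd G A ∪ ((closedNbhd G A)ᶜ ∩ nbhd G I) := by
    rw [nbhd_union]
    rintro v (hv | hv)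
    · exact .inl hv
    · by_cases hvA : v ∈ nbhd G A
      · exact .inl hvA
      refine .inr ⟨fun hv' => hv'.elim (fun hvA' => ?_) hvA, hv⟩
      obtain ⟨i, hi, hvi⟩ := hv
      exact Set.disjoint_left.mp hIA hi (.inr ⟨v, hvA', hvi.symm⟩)
  have hcard := Set.ncard_union_eq (hIA.mono_right Set.subset_union_left).symm
  have hnbhd := (Set.ncard_le_ncard hsub).trans (Set.ncard_union_le _ _)
  simp only [diffOf, hcard]
  omega

lemma IsCritIndep.ncard_le_ncard_compl_closedNbhd_inter_nbhd {A I : Set V} (hA : IsCritIndep G A)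
    (hI : IsIndepSet G I) (hIA : Disjoint I (closedNbhd G A)) :
    I.ncard ≤ ((closedNbhd G A)ᶜ ∩ nbhd G I).ncard := by
  have hle := diffOf_le_critDiff (hA.1.union hI (hIA.mono_right Set.subset_union_right))
  have := diffOf_add_le_diffOf_union hIA
  rw [hA.2] at this
  omega

lemma IsMaxCritIndep.ncard_lt_ncard_compl_closedNbhd_inter_nbhd {A I : Set V}
    (hA : IsMaxCritIndep G A) (hI : IsIndepSet G I) (hne : I.Nonempty)
    (hIA : Disjoint I (closedNbhd G A)) :
    I.ncard < ((closedNbhd G A)ᶜ ∩ nbhd G I).ncard := by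
  refine (hA.1.ncard_le_ncard_compl_closedNbhd_inter_nbhd hI hIA).lt_of_ne fun heq => ?_
  have hAI : IsIndepSet G (A ∪ I) := hA.1.1.union hI (hIA.mono_right Set.subset_union_right)
  have hd := diffOf_add_le_diffOf_union hIA
  rw [← heq, hA.1.2, add_sub_cancel_right] at hd
  have hcard := hA.2 _ ⟨hAI, le_antisymm (diffOf_le_critDiff hAI) hd⟩
  rw [Set.ncard_union_eq (hIA.mono_right Set.subset_union_left).symm] at hcard
  exact ((Set.ncard_pos).mpr hne).ne' (by omega)

lemma IsCritIndep.ncard_le_ncard_inter_nbhd_of_subset_nbhd {A Z : Set V} (hA : IsCritIndep G A)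
    (hZ : Z ⊆ nbhd G A) : Z.ncard ≤ (A ∩ nbhd G Z).ncard := by
  have hsub : nbhd G (A \ nbhd G Z) ⊆ nbhd G A \ Z :=
    fun v ⟨a, ha, hva⟩ => ⟨⟨a, ha.1, hva⟩, fun hvZ => ha.2 ⟨v, hvZ, hva.symm⟩⟩
  have hd := diffOf_le_critDiff (hA.1.mono (Set.sdiff_subset (t := nbhd G Z)))
  have h₁ := Set.ncard_inter_add_ncard_sdiff_eq_ncard A (nbhd G Z)
  have h₂ := Set.ncard_sdiff_add_ncard_of_subset hZ
  have h₃ := Set.ncard_le_ncard hsub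
  rw [← hA.2] at hd
  simp only [diffOf] at hd
  omega

lemma _root_.SimpleGraph.Subgraph.IsMatching.ncard_verts {M : G.Subgraph} (hM : M.IsMatching) :
    M.verts.ncard = 2 * M.edgeSet.ncard := by
  classical
  have := Fintype.ofFinite V
  have hsum := M.coe.sum_degrees_eq_twice_card_edges
  have hdeg (v : M.verts) : M.degree v = 1 := by
    convert Subgraph.isMatching_iff_forall_degree.mp hM v v.2
  simp only [Subgraph.coe_degree, hdeg, Finset.sum_const, Finset.card_univ, smul_eq_mul,
    mul_one] at hsum
  rw [← Nat.card_coe_set_eq, Nat.card_eq_fintype_card, hsum, ← M.image_coe_edgeSet_coe,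
    Set.ncard_image_of_injective _ (Sym2.map.injective Subtype.val_injective),
    ← Set.ncard_coe_finset, coe_edgeFinset]

lemma le_matchNum {M : G.Subgraph} (hM : M.IsMatching) : M.edgeSet.ncard ≤ matchNum G :=
  le_csSup ⟨Nat.card (Sym2 V), by rintro _ ⟨M, -, rfl⟩; exact Set.ncard_le_card _⟩ ⟨M, hM, rfl⟩

lemma le_indepNum {S : Set V} (h : IsIndepSet G S) : S.ncard ≤ indepNum G :=
  le_csSup ⟨Nat.card V, by rintro _ ⟨S, -, rfl⟩; exact Set.ncard_le_card _⟩ ⟨S, h, rfl⟩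

lemma IsIndepSet.two_mul_ncard_inter_verts_le {J : Set V} (hJ : IsIndepSet G J)
    {M : G.Subgraph} (hM : M.IsMatching) : 2 * (J ∩ M.verts).ncard ≤ M.verts.ncard := by
  choose! p hp using fun v (hv : v ∈ M.verts) => (hM hv).exists
  have hinj : Set.InjOn p (J ∩ M.verts) :=
    fun a ha b hb hab => hM.eq_of_adj_right (hp a ha.2) (hab ▸ hp b hb.2)
  have hmaps : ∀ v ∈ J ∩ M.verts, p v ∈ M.verts \ J :=
    fun v hv => ⟨(hp v hv.2).snd_mem, fun hpJ => hJ hv.1 hpJ (M.adj_sub (hp v hv.2))⟩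
  have h₁ := Set.ncard_le_ncard_of_injOn p hmaps hinj
  have h₂ := Set.ncard_inter_add_ncard_sdiff_eq_ncard M.verts J
  rw [Set.inter_comm] at h₂
  omega

lemma indepNum_add_matchNum_le (G : SimpleGraph V) : indepNum G + matchNum G ≤ Nat.card V := by
  obtain ⟨J, hJ, hJc⟩ := Nat.sSup_mem (s := {n | ∃ S : Set V, IsIndepSet G S ∧ S.ncard = n})
    ⟨0, ∅, fun _ h => absurd h (Set.notMem_empty _), Set.ncard_empty _⟩
    ⟨Nat.card V, by rintro _ ⟨S, -, rfl⟩; exact Set.ncard_le_card _⟩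
  obtain ⟨M, hM, hMc⟩ := Nat.sSup_mem
    (s := {n | ∃ M : G.Subgraph, M.IsMatching ∧ M.edgeSet.ncard = n})
    ⟨0, ⊥, fun _ h => absurd h (Set.notMem_empty _), by simp⟩
    ⟨Nat.card (Sym2 V), by rintro _ ⟨M, -, rfl⟩; exact Set.ncard_le_card _⟩
  have h₁ := hJ.two_mul_ncard_inter_verts_le hM
  have h₂ := Set.ncard_inter_add_ncard_sdiff_eq_ncard J M.verts
  have h₃ := Set.ncard_sdiff_add_ncard J M.verts
  have h₄ := Set.ncard_le_card (J ∪ M.verts)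
  have := hM.ncard_verts
  rw [indepNum, matchNum, ← hJc, ← hMc]
  omega

lemma konigEgervary_of_le {J : Set V} (hJ : IsIndepSet G J) {M : G.Subgraph} (hM : M.IsMatching)
    (h : Nat.card V ≤ J.ncard + M.edgeSet.ncard) : KonigEgervary G :=
  le_antisymm (indepNum_add_matchNum_le G) (h.trans (add_le_add (le_indepNum hJ) (le_matchNum hM)))

lemma exists_isMatching_of_forall_ncard_le_inter_nbhd {P Q : Set V} (hPQ : Disjoint P Q)
    (hall : ∀ X ⊆ P, X.ncard ≤ (Q ∩ nbhd G X).ncard) :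
    ∃ M : G.Subgraph, M.IsMatching ∧ M.verts ⊆ P ∪ Q ∧ M.verts.ncard = 2 * P.ncard := by
  classical
  have := Fintype.ofFinite V
  obtain ⟨f, hf, hfQ⟩ := (Fintype.all_card_le_filter_rel_iff_exists_injective
      (fun (x : P) (y : V) => y ∈ Q ∧ G.Adj x y)).mp fun s => by
    have h := hall (Subtype.val '' (s : Set P)) (by simp)
    rw [Set.ncard_image_of_injective _ Subtype.val_injective, Set.ncard_coe_finset] at h
    convert h using 1
    rw [← Set.ncard_coe_finset]
    congr 1
    ext y
    simp only [nbhd, Finset.coe_filter, Set.mem_ofPred_eq, Set.mem_inter_iff, Set.mem_image,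
      Finset.mem_coe, Finset.mem_univ, true_and]
    constructor
    · rintro ⟨x, hx, hyQ, hxy⟩
      exact ⟨hyQ, x, ⟨x, hx, rfl⟩, hxy.symm⟩
    · rintro ⟨hyQ, _, ⟨x, hx, rfl⟩, hyx⟩
      exact ⟨x, hx, hyQ, hyx.symm⟩
  have hrange : Set.range f ⊆ Q := Set.range_subset_iff.mpr fun x => (hfQ x).1
  obtain ⟨M, hMv, hM⟩ := Subgraph.IsMatching.exists_of_disjoint_sets_of_equiv
    (hPQ.mono_right hrange) (Equiv.ofInjective f hf) fun x => (hfQ x).2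
  refine ⟨M, hM, hMv ▸ Set.union_subset_union_right P hrange, ?_⟩
  rw [hMv, Set.ncard_union_eq (hPQ.mono_right hrange), Set.ncard_range_of_injective hf,
    Nat.card_coe_set_eq, two_mul]

theorem IsUniqueOddCycle.disjoint_closedNbhd {u : V} {c : G.Walk u u}
    (hc : IsUniqueOddCycle G c) (hG : ¬ KonigEgervary G) {A : Set V} (hA : IsCritIndep G A) :
    Disjoint {v | v ∈ c.support} (closedNbhd G A) := by
  refine Set.disjoint_left.mpr fun x hxc hxA => hG ?_
  obtain ⟨S, T, hST, hSTY, hS, hT⟩ :=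
    hc.exists_isIndepSet_partition (S := (closedNbhd G A)ᶜ) hxc (· hxA)
  have hSY : Disjoint S (closedNbhd G A) :=
    Set.subset_compl_iff_disjoint_right.mp (hSTY ▸ Set.subset_union_left)
  have hTY : Disjoint T (closedNbhd G A) :=
    Set.subset_compl_iff_disjoint_right.mp (hSTY ▸ Set.subset_union_right)
  obtain ⟨M₁, hM₁, hM₁v, hM₁c⟩ := exists_isMatching_of_forall_ncard_le_inter_nbhd
    hA.1.disjoint_nbhd.symm fun Z hZ => hA.ncard_le_ncard_inter_nbhd_of_subset_nbhd hZ
  obtain ⟨M₂, hM₂, hM₂v, hM₂c⟩ := exists_isMatching_of_forall_ncard_le_inter_nbhd hST fun X hX =>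
    (hA.ncard_le_ncard_compl_closedNbhd_inter_nbhd (hS.mono hX) (hSY.mono_left hX)).trans
      (Set.ncard_le_ncard (hS.inter_nbhd_subset hX hSTY.ge))
  have hdisj : Disjoint M₁.verts M₂.verts := by
    refine Set.disjoint_of_subset (hM₁v.trans ?_) (hM₂v.trans hSTY.le) disjoint_compl_right
    exact Set.union_subset Set.subset_union_right Set.subset_union_left
  have hM := hM₁.sup hM₂ (hdisj.mono M₁.support_subset_verts M₂.support_subset_verts)
  have hJ : IsIndepSet G (A ∪ T) := hA.1.union hT (hTY.mono_right Set.subset_union_right)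
  refine konigEgervary_of_le hJ hM ?_
  have hverts := hM.ncard_verts
  rw [Subgraph.verts_sup, Set.ncard_union_eq hdisj, hM₁c, hM₂c] at hverts
  rw [Set.ncard_union_eq (hTY.mono_right Set.subset_union_left).symm]
  have hN := Set.ncard_add_ncard_compl (closedNbhd G A)
  rw [← hSTY, Set.ncard_union_eq hST, closedNbhd, Set.ncard_union_eq hA.1.disjoint_nbhd] at hN
  omega

lemma IsMaxCritIndep.isStrictlyExpanding {A : Set V} (hA : IsMaxCritIndep G A) :
    IsStrictlyExpanding G (closedNbhd G A)ᶜ := fun _ hIY hne hI =>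
  hA.ncard_lt_ncard_compl_closedNbhd_inter_nbhd hI hne
    (Set.subset_compl_iff_disjoint_right.mp hIY)

namespace IsStrictlyExpanding

variable {Y I₀ I₁ : Set V} {u : V}

lemma ncard_le_ncard_of_eq_insert (hY : IsStrictlyExpanding G Y) (hYu : Y = insert u (I₀ ∪ I₁))
    (hI₀ : IsIndepSet G I₀) : I₀.ncard ≤ I₁.ncard := by
  rcases I₀.eq_empty_or_nonempty with rfl | hne
  · simp
  have hlt := hY I₀ (hYu ▸ fun v hv => .inr (.inl hv)) hne hI₀
  have hsub := hI₀.inter_nbhd_subset (T := insert u I₁) subset_rfl (Y := Y) fun v hv => by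
    rw [hYu] at hv
    rcases hv with rfl | hv | hv
    exacts [.inr (.inl rfl), .inl hv, .inr (.inr hv)]
  have := (Set.ncard_le_ncard (hsub.trans Set.inter_subset_left)).trans (Set.ncard_insert_le u I₁)
  omega

lemma ncard_le_ncard_inter_nbhd (hY : IsStrictlyExpanding G Y) (hYu : Y = insert u (I₀ ∪ I₁))
    (hu : u ∉ I₀) (hI₁ : IsIndepSet G I₁) (hcard : I₀.ncard = I₁.ncard) {X : Set V}
    (hX : X ⊆ insert u I₀) (hXc : X.ncard ≤ I₀.ncard) : X.ncard ≤ (I₁ ∩ nbhd G X).ncard := by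
  -- otherwise `I₁ \ N(X)` is too large for its neighbours, which lie in `insert u I₀ \ X`
  by_contra! hlt
  have hR := Set.ncard_inter_add_ncard_sdiff_eq_ncard I₁ (nbhd G X)
  have hne : (I₁ \ nbhd G X).Nonempty := Set.nonempty_of_ncard_ne_zero (by omega)
  have hgt := hY _ (hYu ▸ fun v hv => .inr (.inr hv.1)) hne (hI₁.mono Set.sdiff_subset)
  have hsub : Y ∩ nbhd G (I₁ \ nbhd G X) ⊆ insert u I₀ \ X := by
    rintro v ⟨hvY, r, hr, hvr⟩
    refine ⟨?_, fun hvX => hr.2 ⟨v, hvX, hvr.symm⟩⟩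
    rw [hYu] at hvY
    rcases hvY with rfl | hv | hv
    · exact .inl rfl
    · exact .inr hv
    · exact absurd hvr (hI₁ hv hr.1)
  have := Set.ncard_le_ncard hsub
  rw [Set.ncard_sdiff hX, Set.ncard_insert_of_notMem hu] at this
  omega

lemma exists_isMatching_verts_eq_of_mem (hY : IsStrictlyExpanding G Y)
    (hYu : Y = insert u (I₀ ∪ I₁)) (hu : u ∉ I₀ ∪ I₁) (hI₀₁ : Disjoint I₀ I₁)
    (hI₁ : IsIndepSet G I₁) (hcard : I₀.ncard = I₁.ncard) {z : V} (hz : z ∈ insert u I₀) :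
    ∃ M : G.Subgraph, M.IsMatching ∧ M.verts = Y \ {z} := by
  have hu' : u ∉ I₀ := fun h => hu (.inl h)
  have hL : (insert u I₀ \ {z}).ncard = I₀.ncard := by
    rw [Set.ncard_sdiff_singleton_of_mem hz, Set.ncard_insert_of_notMem hu', Nat.add_sub_cancel]
  have hdisj : Disjoint (insert u I₀ \ {z}) I₁ :=
    Set.disjoint_insert_left.mpr ⟨fun h => hu (.inr h), hI₀₁⟩ |>.mono_left Set.sdiff_subset
  have hLI : insert u I₀ \ {z} ∪ I₁ = Y \ {z} := by
    have hzI₁ : z ∉ I₁ := fun h =>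
      hz.elim (fun e => hu (.inr (e ▸ h))) (fun h₀ => Set.disjoint_left.mp hI₀₁ h₀ h)
    rw [hYu]
    ext v
    simp only [Set.mem_union, Set.mem_sdiff, Set.mem_insert_iff, Set.mem_singleton_iff]
    grind
  obtain ⟨M, hM, hMv, hMc⟩ := exists_isMatching_of_forall_ncard_le_inter_nbhd hdisj fun X hX =>
    hY.ncard_le_ncard_inter_nbhd hYu hu' hI₁ hcard (hX.trans Set.sdiff_subset)
      (hL ▸ Set.ncard_le_ncard hX)
  refine ⟨M, hM, hLI ▸ Set.eq_of_subset_of_ncard_le hMv ?_⟩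
  rw [hMc, Set.ncard_union_eq hdisj, hL, hcard, two_mul]

lemma exists_isMatching_verts_eq (hY : IsStrictlyExpanding G Y) (hu : u ∈ Y)
    (hI : I₀ ∪ I₁ = Y \ {u}) (hI₀₁ : Disjoint I₀ I₁) (hI₀ : IsIndepSet G I₀)
    (hI₁ : IsIndepSet G I₁) {z : V} (hz : z ∈ Y) :
    ∃ M : G.Subgraph, M.IsMatching ∧ M.verts = Y \ {z} := by
  have hYu : Y = insert u (I₀ ∪ I₁) := by
    rw [hI, Set.insert_sdiff_singleton, Set.insert_eq_of_mem hu]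
  have hYu' : Y = insert u (I₁ ∪ I₀) := Set.union_comm I₀ I₁ ▸ hYu
  have hu' : u ∉ I₀ ∪ I₁ := by simp [hI]
  have hcard := le_antisymm (hY.ncard_le_ncard_of_eq_insert hYu hI₀)
    (hY.ncard_le_ncard_of_eq_insert hYu' hI₁)
  rw [hYu] at hz
  rcases hz with rfl | hz | hz
  · exact hY.exists_isMatching_verts_eq_of_mem hYu hu' hI₀₁ hI₁ hcard (.inl rfl)
  · exact hY.exists_isMatching_verts_eq_of_mem hYu hu' hI₀₁ hI₁ hcard (.inr hz)
  · exact hY.exists_isMatching_verts_eq_of_mem hYu' (Set.union_comm I₀ I₁ ▸ hu') hI₀₁.symm hI₀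
      hcard.symm (.inr hz)

end IsStrictlyExpanding

lemma even_ncard_inter_verts {M M' : G.Subgraph} (hM : M.IsMatching)
    (hM' : M'.IsMatching) {K : Set V}
    (hK : ∀ v ∈ K, ∃ y, (M.spanningCoe ∆ M'.spanningCoe).Adj v y)
    (hKc : ∀ v ∈ K, ∀ y, (M.spanningCoe ∆ M'.spanningCoe).Adj v y → y ∈ K) :
    Even (K ∩ M.verts).ncard := by
  have hN : (M.induce (K ∩ M.verts)).IsMatching := by
    intro v hv
    obtain ⟨p, hp, hpu⟩ := hM hv.2
    obtain ⟨y, hy⟩ := hK v hv.1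
    refine ⟨p, ⟨hv, ⟨hKc v hv.1 p (adj_symmDiff_of_adj hM hM' hy hp), hp.snd_mem⟩, hp⟩,
      fun q hq => hpu q hq.2.2⟩
  have := hN.ncard_verts
  rw [Subgraph.induce_verts] at this
  exact ⟨_, this.trans (two_mul _)⟩

lemma reachable_symmDiff_spanningCoe {Y : Set V} {z w : V} (hzw : z ≠ w) (hz : z ∈ Y)
    {Mz Mw : G.Subgraph} (hMz : Mz.IsMatching) (hMzv : Mz.verts = Y \ {z})
    (hMw : Mw.IsMatching) (hMwv : Mw.verts = Y \ {w}) :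
    (Mz.spanningCoe ∆ Mw.spanningCoe).Reachable z w := by
  -- otherwise both matchings restrict to the component `K` of `z`, so `K ∩ Y` and `K ∩ Y \ {z}`
  -- would both have even size
  by_contra hzw'
  set D := Mz.spanningCoe ∆ Mw.spanningCoe
  set K := {x | D.Reachable z x}
  have hK : ∀ v ∈ K, ∃ y, D.Adj v y := by
    intro v hv
    by_cases hvz : v = z
    · obtain ⟨p, hp, -⟩ := hMw (hMwv ▸ ⟨hz, hzw⟩ : z ∈ Mw.verts)
      refine ⟨p, hvz ▸ adj_symmDiff_spanningCoe.mpr (.inr ⟨hp, fun h => ?_⟩)⟩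
      exact (hMzv ▸ h.fst_mem).2 rfl
    · obtain ⟨q⟩ := (hv : D.Reachable z v).symm
      exact ⟨_, q.adj_snd fun hq => hvz hq.eq⟩
  have hKc : ∀ v ∈ K, ∀ y, D.Adj v y → y ∈ K := fun v hv y h => Reachable.trans hv h.reachable
  have hz' := even_ncard_inter_verts hMz hMw hK hKc
  rw [show D = Mw.spanningCoe ∆ Mz.spanningCoe from symmDiff_comm _ _] at hK hKc
  have hw' := even_ncard_inter_verts hMw hMz hK hKc
  have hKz : K ∩ Mz.verts = (K ∩ Y) \ {z} := by rw [hMzv, Set.inter_sdiff_assoc]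
  have hKw : K ∩ Mw.verts = K ∩ Y := by
    rw [hMwv, ← Set.inter_sdiff_assoc, Set.sdiff_singleton_eq_self fun h => hzw' h.1]
  have hzK : z ∈ K ∩ Y := ⟨Reachable.refl z, hz⟩
  rw [hKz, Set.ncard_sdiff_singleton_of_mem hzK] at hz'
  rw [hKw] at hw'
  have hpos : 0 < (K ∩ Y).ncard := (Set.ncard_pos).mpr ⟨z, hzK⟩
  rcases hw' with ⟨k, hk⟩
  rcases hz' with ⟨l, hl⟩
  omega

theorem exists_odd_isCycle_of_isMatching {Y : Set V} {z w : V} (hzw : G.Adj z w)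
    (hz : z ∈ Y) {Mz Mw : G.Subgraph} (hMz : Mz.IsMatching) (hMzv : Mz.verts = Y \ {z})
    (hMw : Mw.IsMatching) (hMwv : Mw.verts = Y \ {w}) :
    ∃ (x : V) (q : G.Walk x x), q.IsCycle ∧ Odd q.length ∧ z ∈ q.support := by
  set D := Mz.spanningCoe ∆ Mw.spanningCoe
  have hDG : D ≤ G := fun a b h => by
    rcases adj_symmDiff_spanningCoe.mp h with ⟨h, -⟩ | ⟨h, -⟩ <;> exact h.adj_sub
  have hzMz : ∀ a, ¬Mz.Adj a z := fun a h => (hMzv ▸ h.snd_mem).2 rfl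
  have hwMw : ∀ a, ¬Mw.Adj a w := fun a h => (hMwv ▸ h.snd_mem).2 rfl
  have halt : ∀ ⦃a b d⦄, D.Adj a b → D.Adj b d → a ≠ d → (Mz.Adj a b ↔ ¬Mz.Adj b d) := by
    intro a b d hab hbd had
    refine ⟨fun h h' => had (hMz.eq_of_adj_left h.symm h'), fun h' => by_contra fun h => ?_⟩
    have h₁ := (adj_symmDiff_spanningCoe.mp hab).resolve_left (h ·.1)
    have h₂ := (adj_symmDiff_spanningCoe.mp hbd).resolve_left (h' ·.1)
    exact had (hMw.eq_of_adj_left h₁.1.symm h₂.1)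
  have hw : ∀ ⦃a⦄, D.Adj a w → Mz.Adj a w :=
    fun a h => ((adj_symmDiff_spanningCoe.mp h).resolve_right (hwMw a ·.1)).1
  -- the edges of a `D`-path alternate between `Mz` and `Mw`; a path from `z` to `w` starts with
  -- an `Mw`-edge and ends with an `Mz`-edge, so it has even length
  obtain ⟨q, hq⟩ := (reachable_symmDiff_spanningCoe hzw.ne hz hMz hMzv hMw hMwv).exists_isPath
  cases q with
  | nil => exact absurd rfl hzw.ne
  | @cons _ y _ h p =>
    have heven : Even (Walk.cons h p).length := Nat.not_odd_iff_even.mp fun hodd =>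
      hzMz y ((Walk.odd_length_cons_iff_of_alternating (Mz.Adj · ·) halt hw h p hq).mp hodd).symm
    refine ⟨w, .cons hzw.symm ((Walk.cons h p).mapLe hDG),
      (Walk.cons_isCycle_iff _ _).mpr ⟨hq.mapLe hDG, fun hmem => ?_⟩, ?_, by simp⟩
    · rw [Walk.edges_mapLe_eq_edges] at hmem
      rcases adj_symmDiff_spanningCoe.mp ((Walk.cons h p).edges_subset_edgeSet hmem) with
        ⟨h', -⟩ | ⟨h', -⟩
      · exact hzMz w h'
      · exact hwMw z h'.symm
    · rw [Walk.length_cons, Walk.length_mapLe]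
      exact heven.add_one

theorem IsUniqueOddCycle.compl_closedNbhd_subset_support {u : V} {c : G.Walk u u}
    (hc : IsUniqueOddCycle G c) (hG : ¬ KonigEgervary G) {A : Set V} (hA : IsMaxCritIndep G A) :
    (closedNbhd G A)ᶜ ⊆ {v | v ∈ c.support} := by
  have hY := hA.isStrictlyExpanding
  have huY : u ∈ (closedNbhd G A)ᶜ := Set.subset_compl_iff_disjoint_right.mpr
    (hc.disjoint_closedNbhd hG hA.1) c.start_mem_support
  obtain ⟨I₀, I₁, hI₀₁, hI, hI₀, hI₁⟩ :=
    hc.exists_isIndepSet_partition (S := (closedNbhd G A)ᶜ \ {u}) c.start_mem_support (·.2 rfl)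
  intro z hz
  obtain ⟨w, hwY, w', rfl, hwz⟩ := Set.nonempty_of_ncard_ne_zero
    (hY {z} (Set.singleton_subset_iff.mpr hz) (Set.singleton_nonempty z)
      (isIndepSet_singleton z)).ne_bot
  obtain ⟨Mz, hMz, hMzv⟩ := hY.exists_isMatching_verts_eq huY hI hI₀₁ hI₀ hI₁ hz
  obtain ⟨Mw, hMw, hMwv⟩ := hY.exists_isMatching_verts_eq huY hI hI₀₁ hI₀ hI₁ hwY
  obtain ⟨x, q, hq, hodd, hzq⟩ :=
    exists_odd_isCycle_of_isMatching hwz.symm hz hMz hMzv hMw hMwv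
  exact (hc.mem_support_iff hq hodd).mp hzq

end Finite

end AlmostBipartite

/-- If `G` is an almost bipartite non-König-Egerváry graph with unique odd cycle `c`, then
`V(C) ∪ N[diadem G] = V(G)`; consequently `{V(C), N[diadem G]}` is a partition of `V(G)`. -/
theorem stmt3 {V : Type*} [Fintype V] (G : SimpleGraph V) (hG : ¬ KonigEgervary G)
    (u : V) (c : G.Walk u u) (hc : IsUniqueOddCycle G c) :
    {v | v ∈ c.support} ∪ closedNbhd G (diadem G) = Set.univ ∧
    {v | v ∈ c.support} ∩ closedNbhd G (diadem G) = ∅ := by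
  obtain ⟨A, hA⟩ := exists_isMaxCritIndep G
  refine ⟨Set.eq_univ_of_forall fun v => ?_, Set.eq_empty_of_forall_notMem fun v ⟨hvc, hvD⟩ => ?_⟩
  · by_cases hv : v ∈ closedNbhd G A
    · exact .inr (mem_closedNbhd_diadem.mpr ⟨A, hA.1, hv⟩)
    · exact .inl (hc.compl_closedNbhd_subset_support hG hA hv)
  · obtain ⟨A', hA', hvA'⟩ := mem_closedNbhd_diadem.mp hvD
    exact Set.disjoint_left.mp (hc.disjoint_closedNbhd hG hA') hvc hvA'
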